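/- arXiv:1109.4697 — 3 statements merged into one kernel-verified Lean document; each statement's English description precedes it below -/
import Mathlib

section
/- Let G be a locally profinite group, P a closed subgroup, and K0 a compact open subgroup such that G = P·K0 (Iwasawa decomposition). Then for any smooth representation W of P, the restriction map Ind_P^G(W) → Ind_{P ∩ K0}^{K0}(W) is an isomorphism of K0-representations. -/
/-!
Restriction to `K0` is injective because `G = P·K0` and elements of `Ind_P^G W` are
`P`-equivariant. Conversely, `h ∈ Ind_{P ∩ K0}^{K0} W` extends by `q c ↦ ρ q (h c)`; this is
well defined since `q₁ c₁ = q₂ c₂` forces `c₂ c₁⁻¹ = q₂⁻¹ q₁ ∈ P ∩ K0`, and the extension is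
smooth because right translation by `u ∈ U ∩ K0` only moves the `K0`-component.
-/

/-- `f : G → W` lies in the smooth (un-normalized) induction `Ind_P^G W` of the
representation `ρ` of `P`: it is left `P`-equivariant and smooth (right-invariant under some
open subgroup). -/
def IsSmoothInd {k G W : Type*} [Field k] [Group G] [TopologicalSpace G]
    [AddCommGroup W] [Module k W] (P : Subgroup G)
    (ρ : Representation k ↥P W) (f : G → W) : Prop :=
  (∀ (q : ↥P) (g : G), f ((q : G) * g) = ρ q (f g)) ∧
    ∃ U : Subgroup G, IsOpen (U : Set G) ∧ ∀ u ∈ U, ∀ g : G, f (g * u) = f g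

/-- `h : K0 → W` lies in the smooth induction `Ind_{P ∩ K0}^{K0} W`. -/
def IsSmoothIndK0 {k G W : Type*} [Field k] [Group G] [TopologicalSpace G]
    [AddCommGroup W] [Module k W] (P K0 : Subgroup G)
    (ρ : Representation k ↥P W) (h : ↥K0 → W) : Prop :=
  (∀ (u : ↥K0) (hu : (u : G) ∈ P) (x : ↥K0), h (u * x) = ρ ⟨(u : G), hu⟩ (h x)) ∧
    ∃ U : Subgroup G, IsOpen (U : Set G) ∧ ∀ (u : ↥K0), (u : G) ∈ U → ∀ x : ↥K0, h (x * u) = h x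

section Iwasawa

variable {G : Type*} [Group G] {P K0 : Subgroup G} (hIw : ∀ g : G, ∃ q ∈ P, ∃ c ∈ K0, g = q * c)

noncomputable def iwasawaFst (g : G) : P :=
  ⟨(hIw g).choose, (hIw g).choose_spec.1⟩

noncomputable def iwasawaSnd (g : G) : K0 :=
  ⟨(hIw g).choose_spec.2.choose, (hIw g).choose_spec.2.choose_spec.1⟩

theorem iwasawaFst_mul_iwasawaSnd (g : G) :
    (iwasawaFst hIw g : G) * iwasawaSnd hIw g = g :=
  (hIw g).choose_spec.2.choose_spec.2.symm

end Iwasawa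

section Induction

variable {k G W : Type*} [Field k] [Group G] [TopologicalSpace G] [AddCommGroup W] [Module k W]
  {P K0 : Subgroup G} {ρ : Representation k P W}

theorem IsSmoothInd.restrict {f : G → W} (hf : IsSmoothInd P ρ f) :
    IsSmoothIndK0 P K0 ρ (fun x : K0 => f x) := by
  obtain ⟨hequiv, U, hU, hinv⟩ := hf
  exact ⟨fun u hu x => hequiv ⟨u, hu⟩ x, U, hU, fun u hu x => hinv u hu x⟩

theorem IsSmoothIndK0.map_eq_of_mul_eq {h : K0 → W} (hh : IsSmoothIndK0 P K0 ρ h)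
    {q₁ q₂ : P} {c₁ c₂ : K0} (heq : (q₁ : G) * c₁ = q₂ * c₂) :
    ρ q₁ (h c₁) = ρ q₂ (h c₂) := by
  have hm : (q₂ : G)⁻¹ * q₁ = c₂ * (c₁ : G)⁻¹ := by
    rw [eq_mul_inv_iff_mul_eq, mul_assoc, inv_mul_eq_iff_eq_mul, heq]
  have hmem : ((c₂ * c₁⁻¹ : K0) : G) ∈ P := by
    simpa [← hm] using mul_mem (inv_mem q₂.2) q₁.2
  have hP : (⟨_, hmem⟩ : P) = q₂⁻¹ * q₁ := Subtype.ext (by simp [hm])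
  have hc₂ := hh.1 _ hmem c₁
  rw [inv_mul_cancel_right, hP] at hc₂
  rw [hc₂, ← Module.End.mul_apply, ← map_mul, mul_inv_cancel_left]

variable (hIw : ∀ g : G, ∃ q ∈ P, ∃ c ∈ K0, g = q * c)

variable (ρ) in
noncomputable def indExtend (h : K0 → W) (g : G) : W :=
  ρ (iwasawaFst hIw g) (h (iwasawaSnd hIw g))

theorem IsSmoothIndK0.indExtend_eq {h : K0 → W} (hh : IsSmoothIndK0 P K0 ρ h) {g : G}
    {q : P} {c : K0} (hg : g = q * c) : indExtend ρ hIw h g = ρ q (h c) :=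
  hh.map_eq_of_mul_eq (by rw [iwasawaFst_mul_iwasawaSnd, hg])

theorem IsSmoothIndK0.indExtend_coe {h : K0 → W} (hh : IsSmoothIndK0 P K0 ρ h) (x : K0) :
    indExtend ρ hIw h x = h x := by
  simpa using hh.indExtend_eq hIw (q := 1) (one_mul _).symm

theorem IsSmoothIndK0.isSmoothInd_indExtend (hK0 : IsOpen (K0 : Set G)) {h : K0 → W}
    (hh : IsSmoothIndK0 P K0 ρ h) : IsSmoothInd P ρ (indExtend ρ hIw h) := by
  obtain ⟨U, hU, hinv⟩ := hh.2
  have hdecomp := iwasawaFst_mul_iwasawaSnd hIw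
  refine ⟨fun q g => ?_, U ⊓ K0, hU.inter hK0, fun u ⟨huU, huK⟩ g => ?_⟩
  · rw [hh.indExtend_eq hIw (q := q * iwasawaFst hIw g) (c := iwasawaSnd hIw g)
      (by rw [Subgroup.coe_mul, mul_assoc, hdecomp]), map_mul]
    rfl
  · rw [hh.indExtend_eq hIw (q := iwasawaFst hIw g) (c := iwasawaSnd hIw g * ⟨u, huK⟩)
      (by rw [Subgroup.coe_mul, ← mul_assoc, hdecomp]), hinv ⟨u, huK⟩ huU]
    rfl

theorem IsSmoothInd.indExtend_restrict {f : G → W} (hf : IsSmoothInd P ρ f) :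
    indExtend ρ hIw (fun x : K0 => f x) = f := by
  funext g
  rw [indExtend, ← hf.1, iwasawaFst_mul_iwasawaSnd]

noncomputable def restrictEquiv (hK0 : IsOpen (K0 : Set G)) :
    {f : G → W // IsSmoothInd P ρ f} ≃ {h : K0 → W // IsSmoothIndK0 P K0 ρ h} where
  toFun f := ⟨fun x => f.1 x, f.2.restrict⟩
  invFun h := ⟨indExtend ρ hIw h.1, h.2.isSmoothInd_indExtend hIw hK0⟩
  left_inv f := Subtype.ext (f.2.indExtend_restrict hIw)
  right_inv h := Subtype.ext (funext (h.2.indExtend_coe hIw))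

end Induction

theorem stmt8_general (k G W : Type*) [Field k] [Group G] [TopologicalSpace G]
    [AddCommGroup W] [Module k W]
    (P : Subgroup G)
    (K0 : Subgroup G) (hK0open : IsOpen (K0 : Set G))
    (ρ : Representation k ↥P W)
    (hIwasawa : ∀ g : G, ∃ q ∈ P, ∃ c ∈ K0, g = q * c) :
    ∃ e : {f : G → W // IsSmoothInd P ρ f} ≃ {h : ↥K0 → W // IsSmoothIndK0 P K0 ρ h},
      ∀ (f : {f : G → W // IsSmoothInd P ρ f}) (x : ↥K0),
        (e f : ↥K0 → W) x = (f : G → W) (x : G) :=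
  ⟨restrictEquiv hIwasawa hK0open, fun _ _ => rfl⟩

/-- Let `G` be a locally profinite group, `P` a closed subgroup and `K0` a
compact open subgroup with `G = P·K0` (Iwasawa decomposition).  Then for any smooth
representation `W` of `P`, restriction of functions gives an isomorphism of
`K0`-representations `Ind_P^G W ≅ Ind_{P ∩ K0}^{K0} W`; here we assert that the restriction
map is bijective, i.e. that there is an equivalence given by `f ↦ f|_{K0}`. -/
theorem stmt8 (k G W : Type*) [Field k] [Group G] [TopologicalSpace G] [IsTopologicalGroup G]
    [LocallyCompactSpace G] [TotallyDisconnectedSpace G]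
    [AddCommGroup W] [Module k W]
    (P : Subgroup G) (hP : IsClosed (P : Set G))
    (K0 : Subgroup G) (hK0open : IsOpen (K0 : Set G)) (hK0cpt : IsCompact (K0 : Set G))
    (ρ : Representation k ↥P W)
    (hsmooth : ∀ w : W, ∃ U : Subgroup G, IsOpen (U : Set G) ∧
      ∀ u : ↥P, (u : G) ∈ U → ρ u w = w)
    (hIwasawa : ∀ g : G, ∃ q ∈ P, ∃ c ∈ K0, g = q * c) :
    ∃ e : {f : G → W // IsSmoothInd P ρ f} ≃ {h : ↥K0 → W // IsSmoothIndK0 P K0 ρ h},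
      ∀ (f : {f : G → W // IsSmoothInd P ρ f}) (x : ↥K0),
        (e f : ↥K0 → W) x = (f : G → W) (x : G) :=
  stmt8_general k G W P K0 hK0open ρ hIwasawa
end

section
/- Let X be a spectral topological space and U ⊆ X a quasi-compact open subset. Then the closure of U in X is exactly the set of specializations of points of U; that is, x ∈ cl(U) if and only if there exists u ∈ U with x in the closure of {u}. -/
/-!
If `x ∈ closure U`, then every compact open neighbourhood of `x` meets `U`. Compact opens are
closed in the constructible topology, and `U` is compact there by Hochster's theorem, so the
filter `𝓝 x ⊓ 𝓟 U` has a constructible cluster point `u ∈ U`, which then lies in every compact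
open neighbourhood of `x`, i.e. `u ⤳ x`.
-/

open Topology TopologicalSpace Filter

-- `t` precedes the ambient instance so that instance search finds the ambient topology.
theorem TopologicalSpace.IsTopologicalBasis.exists_specializes_of_mem_closure
    {X : Type*} {t : TopologicalSpace X} [TopologicalSpace X]
    {B : Set (Set X)} (hB : IsTopologicalBasis B)
    (hBt : ∀ V ∈ B, IsClosed[t] V) {U : Set X} (hU : @IsCompact X t U) {x : X}
    (hx : x ∈ closure U) : ∃ u ∈ U, u ⤳ x := by
  have : NeBot (𝓝 x ⊓ 𝓟 U) := mem_closure_iff_clusterPt.mp hx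
  obtain ⟨u, huU, hu⟩ := @IsCompact.exists_clusterPt X t U hU (𝓝 x ⊓ 𝓟 U) _ inf_le_right
  refine ⟨u, huU, hB.nhds_hasBasis.specializes_iff.mpr fun V ⟨hVB, hxV⟩ => ?_⟩
  have hVF : V ∈ 𝓝 x ⊓ 𝓟 U := mem_inf_of_left (hB.mem_nhds hVB hxV)
  exact @IsClosed.closure_subset X t V (hBt V hVB) u
    (@ClusterPt.mem_closure_of_mem X t u _ hu V hVF)

section Constructible

variable {X : Type*} [TopologicalSpace X]

lemma IsCompact.isClosed_constructibleTopology_of_isOpen {s : Set X} (hs : IsCompact s)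
    (ho : IsOpen s) : IsClosed[constructibleTopology X] s :=
  @IsClosed.mk X (constructibleTopology X) s
    (IsCompact.isOpen_constructibleTopology_of_isClosed (by rwa [compl_compl]) ho.isClosed_compl)

lemma isCompact_univ_constructibleTopology [CompactSpace X] [QuasiSober X] [PrespectralSpace X]
    [QuasiSeparatedSpace X] : @IsCompact X (constructibleTopology X) Set.univ := by
  simpa only [Set.image_univ_of_surjective (WithTopology.ofTopology_surjective _)] using
    @IsCompact.image _ _ _ (constructibleTopology X) _ _ isCompact_univ
      (WithTopology.continuous_ofTopology (constructibleTopology X))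

theorem IsCompact.closure_eq_setOf_specializes_of_isOpen [CompactSpace X] [QuasiSober X]
    [PrespectralSpace X] [QuasiSeparatedSpace X] {U : Set X} (hUc : IsCompact U)
    (hUo : IsOpen U) : closure U = {x | ∃ u ∈ U, u ⤳ x} := by
  refine subset_antisymm (fun x hx => ?_)
    fun x ⟨u, huU, hux⟩ => hux.mem_closed isClosed_closure (subset_closure huU)
  exact PrespectralSpace.isTopologicalBasis.exists_specializes_of_mem_closure
    (fun V hV => hV.2.isClosed_constructibleTopology_of_isOpen hV.1)
    (@IsCompact.of_isClosed_subset X (constructibleTopology X) _ _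
      isCompact_univ_constructibleTopology (hUc.isClosed_constructibleTopology_of_isOpen hUo)
      (Set.subset_univ U)) hx

end Constructible

theorem stmt10_general (X : Type*) [TopologicalSpace X]
    [CompactSpace X] [QuasiSober X] [QuasiSeparatedSpace X]
    (hbasis : TopologicalSpace.IsTopologicalBasis {U : Set X | IsOpen U ∧ IsCompact U})
    (U : Set X) (hUopen : IsOpen U) (hUcpt : IsCompact U) :
    closure U = {x : X | ∃ u ∈ U, u ⤳ x} :=
  have : PrespectralSpace X := ⟨hbasis⟩
  hUcpt.closure_eq_setOf_specializes_of_isOpen hUopen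

/-- Let `X` be a spectral topological space (quasi-compact, sober, with a
basis of quasi-compact opens that is stable under intersection) and `U ⊆ X` a quasi-compact
open subset.  Then the closure of `U` in `X` is exactly the set of specializations of points
of `U`: `x ∈ cl(U)` iff there exists `u ∈ U` with `x ∈ closure {u}` (i.e. `u ⤳ x`). -/
theorem stmt10 (X : Type*) [TopologicalSpace X]
    [CompactSpace X] [QuasiSober X] [T0Space X] [QuasiSeparatedSpace X]
    (hbasis : TopologicalSpace.IsTopologicalBasis {U : Set X | IsOpen U ∧ IsCompact U})
    (U : Set X) (hUopen : IsOpen U) (hUcpt : IsCompact U) :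
    closure U = {x : X | ∃ u ∈ U, u ⤳ x} :=
  stmt10_general X hbasis U hUopen hUcpt
end

section
/- Let G be a locally profinite group and P a closed subgroup such that G/P is compact, and suppose W is a smooth representation of P such that Ind_P^G(W) is admissible. Then W is an admissible representation of P. -/
open Pointwise in
theorem exists_isCompact_isOpen_subgroup_subset {G : Type*} [Group G] [TopologicalSpace G]
    [IsTopologicalGroup G] [LocallyCompactSpace G] [TotallyDisconnectedSpace G]
    {V : Set G} (hV : IsOpen V) (h1V : (1 : G) ∈ V) :
    ∃ K : Subgroup G, IsCompact (K : Set G) ∧ IsOpen (K : Set G) ∧ (K : Set G) ⊆ V := by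
  obtain ⟨s, hs, h1s, hsV⟩ := exists_compact_subset hV h1V
  obtain ⟨C, hC, h1C, hCint⟩ :=
    loc_compact_Haus_tot_disc_of_zero_dim.mem_nhds_iff.1 (isOpen_interior.mem_nhds h1s)
  have hCs : C ⊆ s := hCint.trans interior_subset
  have hCc : IsCompact C := hs.of_isClosed_subset hC.1 hCs
  obtain ⟨T, hT, hCT⟩ := compact_open_separated_mul_right hCc hC.2 subset_rfl
  -- Right multiplication by the generators preserves `C ∋ 1`, which traps `K` inside `C`.
  set K := Subgroup.closure (T ∩ T⁻¹)
  have hCK : ∀ x ∈ K, ∀ c ∈ C, c * x ∈ C := by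
    intro x hx
    induction hx using Subgroup.closure_induction'' with
    | mem t ht => exact fun c hc ↦ hCT (Set.mul_mem_mul hc ht.1)
    | inv_mem t ht => exact fun c hc ↦ hCT (Set.mul_mem_mul hc ht.2)
    | one => simp
    | mul x y _ _ hx hy => exact fun c hc ↦ by simpa [mul_assoc] using hy _ (hx c hc)
  have hKC : (K : Set G) ⊆ C := fun x hx ↦ by simpa using hCK x hx 1 h1C
  have hKo : IsOpen (K : Set G) :=
    K.isOpen_of_mem_nhds (g := 1) <| Filter.mem_of_superset
      (Filter.inter_mem hT (inv_mem_nhds_one G hT)) Subgroup.subset_closure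
  exact ⟨K, hCc.of_isClosed_subset (K.isClosed_of_isOpen hKo) hKC, hKo,
    hKC.trans (hCs.trans hsV)⟩

section IndOfFixed

variable {k G W : Type*} [CommSemiring k] [Group G] [AddCommMonoid W] [Module k W]
  {P K : Subgroup G} {ρ : Representation k P W} {w : W}

open Classical in
/-- The function `p * u ↦ ρ p w` on `P * K`, extended by zero. It is well defined as soon as
`w` is fixed by `P ∩ K`. -/
noncomputable def indOfFixed (P K : Subgroup G) (ρ : Representation k P W) (w : W) : G → W :=
  fun g ↦ if h : ∃ p : P, (p : G)⁻¹ * g ∈ K then ρ h.choose w else 0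

theorem indOfFixed_eq (hw : ∀ q : P, (q : G) ∈ K → ρ q w = w) {p : P} {g : G}
    (hpg : (p : G)⁻¹ * g ∈ K) : indOfFixed P K ρ w g = ρ p w := by
  have h : ∃ p : P, (p : G)⁻¹ * g ∈ K := ⟨p, hpg⟩
  have hq : ((h.choose⁻¹ * p : P) : G) ∈ K := by
    simpa [mul_assoc] using K.mul_mem h.choose_spec (K.inv_mem hpg)
  calc indOfFixed P K ρ w g = ρ h.choose w := dif_pos h
    _ = ρ h.choose (ρ (h.choose⁻¹ * p) w) := by rw [hw _ hq]
    _ = ρ p w := by rw [← Module.End.mul_apply, ← map_mul, mul_inv_cancel_left]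

theorem indOfFixed_eq_zero {g : G} (h : ¬∃ p : P, (p : G)⁻¹ * g ∈ K) :
    indOfFixed P K ρ w g = 0 :=
  dif_neg h

theorem indOfFixed_one (hw : ∀ q : P, (q : G) ∈ K → ρ q w = w) :
    indOfFixed P K ρ w 1 = w := by
  simpa using indOfFixed_eq hw (p := 1) (g := 1) (by simp)

theorem indOfFixed_mul_right (hw : ∀ q : P, (q : G) ∈ K → ρ q w = w) {u : G} (hu : u ∈ K)
    (g : G) : indOfFixed P K ρ w (g * u) = indOfFixed P K ρ w g := by
  by_cases h : ∃ p : P, (p : G)⁻¹ * g ∈ K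
  · obtain ⟨p, hp⟩ := h
    rw [indOfFixed_eq hw hp, indOfFixed_eq hw (by simpa [mul_assoc] using K.mul_mem hp hu)]
  · refine (indOfFixed_eq_zero fun ⟨p, hp⟩ ↦ h ⟨p, ?_⟩).trans (indOfFixed_eq_zero h).symm
    simpa [mul_assoc] using K.mul_mem hp (K.inv_mem hu)

theorem indOfFixed_mul_left (hw : ∀ q : P, (q : G) ∈ K → ρ q w = w) (q : P) (g : G) :
    indOfFixed P K ρ w (q * g) = ρ q (indOfFixed P K ρ w g) := by
  by_cases h : ∃ p : P, (p : G)⁻¹ * g ∈ K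
  · obtain ⟨p, hp⟩ := h
    rw [indOfFixed_eq hw hp, indOfFixed_eq hw (p := q * p) (by simpa [mul_assoc] using hp),
      map_mul, Module.End.mul_apply]
  · rw [indOfFixed_eq_zero h, map_zero]
    refine indOfFixed_eq_zero fun ⟨p, hp⟩ ↦ h ⟨q⁻¹ * p, ?_⟩
    simpa [mul_assoc] using hp

end IndOfFixed

theorem isSmoothInd_indOfFixed {k G W : Type*} [Field k] [Group G] [TopologicalSpace G]
    [AddCommGroup W] [Module k W] {P K : Subgroup G} {ρ : Representation k P W} {w : W}
    (hw : ∀ q : P, (q : G) ∈ K → ρ q w = w) (hK : IsOpen (K : Set G)) :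
    IsSmoothInd P ρ (indOfFixed P K ρ w) :=
  ⟨indOfFixed_mul_left hw, K, hK, fun _ hu ↦ indOfFixed_mul_right hw hu⟩

theorem stmt14_general (k G W : Type*) [Field k] [Group G] [TopologicalSpace G] [IsTopologicalGroup G]
    [LocallyCompactSpace G] [TotallyDisconnectedSpace G]
    [AddCommGroup W] [Module k W]
    (P : Subgroup G)
    (ρ : Representation k ↥P W)
    (hadm : ∀ K : Subgroup G, IsCompact (K : Set G) → IsOpen (K : Set G) →
      ∃ (n : ℕ) (v : Fin n → (G → W)), ∀ f : G → W, IsSmoothInd P ρ f →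
        (∀ u ∈ K, ∀ g : G, f (g * u) = f g) → f ∈ Submodule.span k (Set.range v)) :
    ∀ J : Subgroup ↥P, IsCompact (J : Set ↥P) → IsOpen (J : Set ↥P) →
      ∃ (n : ℕ) (v : Fin n → W), ∀ w : W, (∀ u ∈ J, ρ u w = w) →
        w ∈ Submodule.span k (Set.range v) := by
  intro J _ hJ
  obtain ⟨V, hV, hVJ⟩ := isOpen_induced_iff.mp hJ
  have h1V : ((1 : P) : G) ∈ V := by rw [← Set.mem_preimage, hVJ]; exact J.one_mem
  obtain ⟨K, hKc, hKo, hKV⟩ := exists_isCompact_isOpen_subgroup_subset hV h1V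
  obtain ⟨n, v, hv⟩ := hadm K hKc hKo
  refine ⟨n, fun i ↦ v i 1, fun w hw ↦ ?_⟩
  have hwK : ∀ q : P, (q : G) ∈ K → ρ q w = w := fun q hq ↦
    hw q (by rw [← SetLike.mem_coe, ← hVJ]; exact hKV hq)
  have hf := hv _ (isSmoothInd_indOfFixed hwK hKo) fun _ hu ↦ indOfFixed_mul_right hwK hu
  simpa [indOfFixed_one hwK, ← Set.range_comp, Function.comp_def] using
    Submodule.apply_mem_span_image_of_mem_span (LinearMap.proj (R := k) (φ := fun _ : G ↦ W) 1) hf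

/-- Let `G` be a locally profinite group and `P` a closed subgroup with
`G/P` compact, and let `W` be a smooth representation of `P` such that `Ind_P^G W` is
admissible (for each compact open subgroup `K ⊆ G`, the `K`-invariants — for the right
translation action — span a finite-dimensional space).  Then `W` is an admissible
representation of `P`: for each compact open subgroup `J ⊆ P`, the `J`-invariants of `W`
are contained in a finite-dimensional subspace. -/
theorem stmt14 (k G W : Type*) [Field k] [Group G] [TopologicalSpace G] [IsTopologicalGroup G]
    [LocallyCompactSpace G] [TotallyDisconnectedSpace G]
    [AddCommGroup W] [Module k W]
    (P : Subgroup G) (hP : IsClosed (P : Set G)) [CompactSpace (G ⧸ P)]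
    (ρ : Representation k ↥P W)
    (hsmooth : ∀ w : W, ∃ U : Subgroup G, IsOpen (U : Set G) ∧
      ∀ u : ↥P, (u : G) ∈ U → ρ u w = w)
    (hadm : ∀ K : Subgroup G, IsCompact (K : Set G) → IsOpen (K : Set G) →
      ∃ (n : ℕ) (v : Fin n → (G → W)), ∀ f : G → W, IsSmoothInd P ρ f →
        (∀ u ∈ K, ∀ g : G, f (g * u) = f g) → f ∈ Submodule.span k (Set.range v)) :
    ∀ J : Subgroup ↥P, IsCompact (J : Set ↥P) → IsOpen (J : Set ↥P) →
      ∃ (n : ℕ) (v : Fin n → W), ∀ w : W, (∀ u ∈ J, ρ u w = w) →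
        w ∈ Submodule.span k (Set.range v) :=
  stmt14_general k G W P ρ hadm
end
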